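/- arXiv:1903.09793 — 3 statements merged into one kernel-verified Lean document; each statement's English description precedes it below -/
import Mathlib

section
/- Let f : ℝ^N_+ → ℝ_+ be a WSI function that is continuous on ℝ^N_+, define f_∞(x) = lim_{h→∞} f(hx)/h, and let x ∈ ℝ^N_+. Then f_∞(x) = lim_{n→∞} f(h_n x_n)/h_n for all sequences (x_n) ⊂ ℝ^N_+ and (h_n) ⊂ ℝ_{++} such that lim_{n→∞} x_n = x and lim_{n→∞} h_n = ∞. -/
/-!
Weak scalability makes `h ↦ f (h • y) / h` nonincreasing on `(0, ∞)`, so once `h_n ≥ h₀` we have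
`f (h_n • x_n) / h_n ≤ f (h₀ • x_n) / h₀`, which tends to `f (h₀ • x) / h₀` by continuity; for large
`h₀` this is close to `f_∞ x`. Conversely, for `0 < t < 1` eventually `t • x ≤ x_n`, so by
monotonicity `f (h_n • x_n) / h_n ≥ f (h_n • t • x) / h_n`, which tends to `t * f_∞ x`.
-/

open Filter Topology

section Module

variable {α E : Type*} [AddCommGroup E] [Module ℝ E]

theorem tendsto_apply_smul_smul_div {f : E → ℝ} {x : E} {a t : ℝ} (ht : 0 < t)
    (hf : Tendsto (fun h : ℝ => f (h • x) / h) atTop (𝓝 a)) :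
    Tendsto (fun h : ℝ => f (h • t • x) / h) atTop (𝓝 (t * a)) := by
  refine ((hf.comp (tendsto_id.atTop_mul_const ht)).const_mul t).congr' ?_
  filter_upwards [eventually_gt_atTop 0] with h hh
  simp only [Function.comp_apply, id, smul_smul]
  field_simp

variable [PartialOrder E] [PosSMulMono ℝ E]

theorem apply_smul_div_le_of_le {f : E → ℝ}
    (hws : ∀ x : E, 0 ≤ x → ∀ α : ℝ, 1 ≤ α → f (α • x) ≤ α * f x)
    {y : E} (hy : 0 ≤ y) {s t : ℝ} (hs : 0 < s) (hst : s ≤ t) :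
    f (t • y) / t ≤ f (s • y) / s := by
  have ht : 0 < t := hs.trans_le hst
  have hscale := hws (s • y) (smul_nonneg hs.le hy) (t / s) ((one_le_div hs).2 hst)
  rw [smul_smul, div_mul_cancel₀ _ hs.ne'] at hscale
  calc f (t • y) / t ≤ t / s * f (s • y) / t := by gcongr
    _ = f (s • y) / s := by field_simp

variable [TopologicalSpace E] [ContinuousConstSMul ℝ E]

theorem eventually_apply_smul_div_lt {f : E → ℝ}
    (hws : ∀ x : E, 0 ≤ x → ∀ α : ℝ, 1 ≤ α → f (α • x) ≤ α * f x)
    (hcont : ContinuousOn f {x : E | 0 ≤ x}) {x : E} (hx : 0 ≤ x) {a b : ℝ}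
    (hf : Tendsto (fun h : ℝ => f (h • x) / h) atTop (𝓝 a)) (hab : a < b)
    {l : Filter α} {xn : α → E} {hn : α → ℝ} (hxn : ∀ᶠ n in l, 0 ≤ xn n)
    (hxnlim : Tendsto xn l (𝓝 x)) (hhnlim : Tendsto hn l atTop) :
    ∀ᶠ n in l, f (hn n • xn n) / hn n < b := by
  obtain ⟨s, hs_lt, hs_pos⟩ := ((hf.eventually (gt_mem_nhds hab)).and (eventually_gt_atTop 0)).exists
  have hcx : Tendsto (fun n => f (s • xn n)) l (𝓝 (f (s • x))) :=
    (hcont _ (smul_nonneg hs_pos.le hx)).tendsto.comp <| tendsto_nhdsWithin_iff.2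
      ⟨hxnlim.const_smul s, hxn.mono fun n h => smul_nonneg hs_pos.le h⟩
  filter_upwards [(hcx.div_const s).eventually (gt_mem_nhds hs_lt), hhnlim.eventually_ge_atTop s,
    hxn] with n hlt hle hxn
  exact (apply_smul_div_le_of_le hws hxn hs_pos hle).trans_lt hlt

end Module

section Pi

variable {α ι : Type*} [Finite ι]

theorem eventually_smul_le_of_tendsto {l : Filter α} {x : ι → ℝ} {xn : α → ι → ℝ} (hx : 0 ≤ x)
    (hxn : ∀ᶠ n in l, 0 ≤ xn n) (hxnlim : Tendsto xn l (𝓝 x)) {t : ℝ} (ht : t < 1) :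
    ∀ᶠ n in l, t • x ≤ xn n := by
  have hcoord : ∀ i, ∀ᶠ n in l, t * x i ≤ xn n i := by
    intro i
    rcases (hx i).eq_or_lt with hzero | hpos
    · filter_upwards [hxn] with n hn
      simpa [← hzero] using hn i
    · exact ((tendsto_pi_nhds.1 hxnlim i).eventually
        (lt_mem_nhds (mul_lt_of_lt_one_left hpos ht))).mono fun n => le_of_lt
  filter_upwards [eventually_all.2 hcoord] with n hn i using hn i

theorem eventually_lt_apply_smul_div {f : (ι → ℝ) → ℝ}
    (hmono : ∀ x y : ι → ℝ, 0 ≤ x → x ≤ y → f x ≤ f y) {x : ι → ℝ} (hx : 0 ≤ x) {a b : ℝ}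
    (hf : Tendsto (fun h : ℝ => f (h • x) / h) atTop (𝓝 a)) (hba : b < a)
    {l : Filter α} {xn : α → ι → ℝ} {hn : α → ℝ} (hxn : ∀ᶠ n in l, 0 ≤ xn n)
    (hxnlim : Tendsto xn l (𝓝 x)) (hhnlim : Tendsto hn l atTop) :
    ∀ᶠ n in l, b < f (hn n • xn n) / hn n := by
  have hmul : Tendsto (fun t : ℝ => t * a) (𝓝[<] 1) (𝓝 a) := by
    simpa using ((continuous_mul_const a).tendsto 1).mono_left nhdsWithin_le_nhds
  obtain ⟨t, hbt, ht0, ht1⟩ :=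
    ((hmul.eventually (lt_mem_nhds hba)).and (Ioo_mem_nhdsLT zero_lt_one)).exists
  have hscaled := (tendsto_apply_smul_smul_div ht0 hf).comp hhnlim
  filter_upwards [hscaled.eventually (lt_mem_nhds hbt),
    eventually_smul_le_of_tendsto hx hxn hxnlim ht1, hhnlim.eventually_gt_atTop 0]
    with n hlt hle hpos
  refine hlt.trans_le (div_le_div_of_nonneg_right (hmono _ _ ?_ ?_) hpos.le)
  · exact smul_nonneg hpos.le (smul_nonneg ht0.le hx)
  · exact smul_le_smul_of_nonneg_left hle hpos.le

end Pi

theorem stmt6_general {N : ℕ} (f : (Fin N → ℝ) → ℝ)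
    (hmono : ∀ x y : Fin N → ℝ, 0 ≤ x → x ≤ y → f x ≤ f y)
    (hws : ∀ x : Fin N → ℝ, 0 ≤ x → ∀ α : ℝ, 1 ≤ α → f (α • x) ≤ α * f x)
    (hcont : ContinuousOn f {x : Fin N → ℝ | 0 ≤ x})
    (F : (Fin N → ℝ) → ℝ)
    (hF : ∀ x : Fin N → ℝ, 0 ≤ x →
      Tendsto (fun h : ℝ => f (h • x) / h) atTop (nhds (F x)))
    (x : Fin N → ℝ) (hx : 0 ≤ x)
    (xn : ℕ → Fin N → ℝ) (hn : ℕ → ℝ)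
    (hxn : ∀ n, 0 ≤ xn n) (hxnlim : Tendsto xn atTop (nhds x))
    (hhnlim : Tendsto hn atTop atTop) :
    Tendsto (fun n => f (hn n • xn n) / hn n) atTop (nhds (F x)) :=
  tendsto_order.2
    ⟨fun _ hb => eventually_lt_apply_smul_div hmono hx (hF x hx) hb
        (Eventually.of_forall hxn) hxnlim hhnlim,
      fun _ hb => eventually_apply_smul_div_lt hws hcont hx (hF x hx) hb
        (Eventually.of_forall hxn) hxnlim hhnlim⟩

/-- If f is a WSI function continuous on the nonnegative orthant,
then for every x in the orthant and all sequences x_n → x (in the orthant) and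
h_n → ∞ (with h_n > 0), one has f(h_n x_n)/h_n → f_∞(x). -/
theorem stmt6 {N : ℕ} (f : (Fin N → ℝ) → ℝ)
    (hnn : ∀ x : Fin N → ℝ, 0 ≤ x → 0 ≤ f x)
    (hmono : ∀ x y : Fin N → ℝ, 0 ≤ x → x ≤ y → f x ≤ f y)
    (hws : ∀ x : Fin N → ℝ, 0 ≤ x → ∀ α : ℝ, 1 ≤ α → f (α • x) ≤ α * f x)
    (hcont : ContinuousOn f {x : Fin N → ℝ | 0 ≤ x})
    (F : (Fin N → ℝ) → ℝ)
    (hF : ∀ x : Fin N → ℝ, 0 ≤ x →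
      Tendsto (fun h : ℝ => f (h • x) / h) atTop (nhds (F x)))
    (x : Fin N → ℝ) (hx : 0 ≤ x)
    (xn : ℕ → Fin N → ℝ) (hn : ℕ → ℝ)
    (hxn : ∀ n, 0 ≤ xn n) (hxnlim : Tendsto xn atTop (nhds x))
    (hhn : ∀ n, 0 < hn n) (hhnlim : Tendsto hn atTop atTop) :
    Tendsto (fun n => f (hn n • xn n) / hn n) atTop (nhds (F x)) :=
  stmt6_general f hmono hws hcont F hF x hx xn hn hxn hxnlim hhnlim
end

section
/- Let T : ℝ^N_+ → ℝ^N_{++} be a continuous SI mapping, ‖·‖_a and ‖·‖_b monotone norms on ℝ^N, and suppose λ_∞ := ρ(T_∞) > 0, where T_∞ is the asymptotic mapping of T. Suppose for each p̄ > 0 the pair (P(p̄), U(p̄)) ∈ ℝ^N_{++} × ℝ_{++} satisfies P(p̄) = U(p̄) T(P(p̄)) and ‖P(p̄)‖_a = p̄, and set E(p̄) := U(p̄)/‖P(p̄)‖_b. Then sup_{p̄>0} U(p̄) = lim_{p̄→∞} U(p̄) = 1/λ_∞, and sup_{p̄>0} E(p̄) = lim_{p̄→0⁺} E(p̄) = 1/‖T(0)‖_b.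 -/
/-!
Scalability makes `h ↦ T(h x)/h` nonincreasing, so `T_∞` is monotone, positively homogeneous
and `T_∞ ≤ T`. For a solution `P = U T(P)` this gives the Collatz–Wielandt bound `μ ≤ 1/U` for
every eigenvalue `μ` of `T_∞`, hence `U ≤ 1/λ_∞`. Comparing two solutions at the coordinate where
their ratio is largest shows that `U` is nondecreasing in the budget, so `U → U* ≤ 1/λ_∞`; a
cluster point `x*` of `P(p̄)/p̄` as `p̄ → ∞` satisfies `T_∞(x*) = x*/U*`, whence `1/U* ≤ λ_∞`.
For the efficiency, `E = 1/‖T(P)‖_b`: monotonicity bounds it by `1/‖T(0)‖_b`, and `P(p̄) → 0`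
as `p̄ → 0⁺` gives the limit.
-/

open Filter Topology Set

variable {ι : Type*}

theorem isLUB_image_of_tendsto {α β : Type*} [TopologicalSpace β] [Preorder β]
    [ClosedIicTopology β] {f : α → β} {s : Set α} {l : Filter α} [l.NeBot] {a : β}
    (hle : ∀ x ∈ s, f x ≤ a) (hs : ∀ᶠ x in l, x ∈ s) (hf : Tendsto f l (𝓝 a)) :
    IsLUB (f '' s) a :=
  ⟨forall_mem_image.2 hle, fun _ hb =>
    le_of_tendsto hf (hs.mono fun _ hx => hb (mem_image_of_mem f hx))⟩

theorem MonotoneOn.tendsto_atTop_csSup_image_Ioi {f : ℝ → ℝ} {a : ℝ}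
    (hf : MonotoneOn f (Ioi a)) (hb : BddAbove (f '' Ioi a)) :
    Tendsto f atTop (𝓝 (sSup (f '' Ioi a))) := by
  rw [← tendsto_comp_val_Ioi_atTop]
  refine tendsto_atTop_isLUB (fun x y hxy => hf x.2 y.2 hxy) ?_
  rw [← image_eq_range]
  exact isLUB_csSup (nonempty_Ioi.image f) hb

theorem eventually_smul_le_of_tendsto_s13 [Finite ι] {α : Type*} {l : Filter α} {x : α → ι → ℝ}
    {x₀ : ι → ℝ} (hx0 : ∀ᶠ a in l, 0 ≤ x a) (hx₀ : 0 ≤ x₀) (hx : Tendsto x l (𝓝 x₀))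
    {c : ℝ} (hc : c < 1) : ∀ᶠ a in l, c • x₀ ≤ x a := by
  have : ∀ i, ∀ᶠ a in l, c * x₀ i ≤ x a i := fun i => by
    rcases (show 0 ≤ x₀ i from hx₀ i).eq_or_lt with h | h
    · exact hx0.mono fun a ha => by simpa [← h] using ha i
    · exact ((tendsto_pi_nhds.1 hx i).eventually (eventually_gt_nhds
        (by nlinarith : c * x₀ i < x₀ i))).mono fun _ => le_of_lt
  simpa only [Pi.le_def, Pi.smul_apply, smul_eq_mul, eventually_all] using this

/-- Stated by its axioms, since `ι → ℝ` already carries the sup norm. -/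
structure IsMonotoneNorm (ν : (ι → ℝ) → ℝ) : Prop where
  eq_zero_iff : ∀ x, ν x = 0 ↔ x = 0
  smul : ∀ (a : ℝ) (x : ι → ℝ), ν (a • x) = |a| * ν x
  add_le : ∀ x y : ι → ℝ, ν (x + y) ≤ ν x + ν y
  mono : ∀ x y : ι → ℝ, 0 ≤ x → x ≤ y → ν x ≤ ν y

namespace IsMonotoneNorm

variable {ν : (ι → ℝ) → ℝ}

def toSeminorm (hν : IsMonotoneNorm ν) : Seminorm ℝ (ι → ℝ) :=
  Seminorm.of ν hν.add_le hν.smul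

theorem nonneg (hν : IsMonotoneNorm ν) (x : ι → ℝ) : 0 ≤ ν x :=
  apply_nonneg hν.toSeminorm x

theorem pos (hν : IsMonotoneNorm ν) {x : ι → ℝ} (hx : x ≠ 0) : 0 < ν x :=
  (hν.nonneg x).lt_of_ne' (mt (hν.eq_zero_iff x).1 hx)

theorem pos_of_forall_pos [Nonempty ι] (hν : IsMonotoneNorm ν) {x : ι → ℝ}
    (hx : ∀ i, 0 < x i) : 0 < ν x :=
  hν.pos fun h => (hx (Classical.arbitrary ι)).ne' (congrFun h _)

theorem continuous [Fintype ι] (hν : IsMonotoneNorm ν) : Continuous ν :=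
  hν.toSeminorm.convexOn.locallyLipschitz.continuous

theorem apply_le_div [DecidableEq ι] (hν : IsMonotoneNorm ν) {x : ι → ℝ} (hx : 0 ≤ x)
    (i : ι) : x i ≤ ν x / ν (Pi.single i 1) := by
  rw [le_div_iff₀ (hν.pos (by simp))]
  have hle : Pi.single i (x i) ≤ x := fun j => by
    rcases eq_or_ne j i with rfl | hj
    · simp
    · simpa [hj] using hx j
  calc x i * ν (Pi.single i 1) = ν (x i • Pi.single i 1) := by
        rw [hν.smul, abs_of_nonneg (hx i)]
    _ ≤ ν x := by
        rw [← Pi.single_smul', smul_eq_mul, mul_one]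
        exact hν.mono _ _ (Pi.single_nonneg.2 (hx i)) hle

end IsMonotoneNorm

/-- Its supremum is the spectral radius `ρ(S)`. -/
def nonnegEigenvalues (S : (ι → ℝ) → ι → ℝ) : Set ℝ :=
  {μ | 0 ≤ μ ∧ ∃ x : ι → ℝ, 0 ≤ x ∧ x ≠ 0 ∧ S x = μ • x}

theorem eigenvalue_le_of_apply_le_smul [Finite ι] {S : (ι → ℝ) → ι → ℝ}
    (hmono : MonotoneOn S (Ici 0)) (hsmul : ∀ x, 0 ≤ x → ∀ c : ℝ, 0 < c → S (c • x) = c • S x)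
    {p : ι → ℝ} (hp : ∀ i, 0 < p i) {lam : ℝ} (hSp : S p ≤ lam • p)
    {μ : ℝ} {y : ι → ℝ} (hy0 : 0 ≤ y) (hy : y ≠ 0) (hSy : S y = μ • y) : μ ≤ lam := by
  obtain ⟨i, hi⟩ : ∃ i, y i ≠ 0 := Function.ne_iff.1 hy
  have : Nonempty ι := ⟨i⟩
  obtain ⟨j, hj⟩ := Finite.exists_max fun i => y i / p i
  set c := y j / p j
  have hc : 0 < c := (div_pos ((hy0 i).lt_of_ne' hi) (hp i)).trans_le (hj i)
  have hyc : y ≤ c • p := fun i => (div_le_iff₀ (hp i)).1 (hj i)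
  have hyj : y j = c * p j := (div_mul_cancel₀ _ (hp j).ne').symm
  have key : μ * y j ≤ lam * y j :=
    calc μ * y j = S y j := by rw [hSy, Pi.smul_apply, smul_eq_mul]
      _ ≤ S (c • p) j := hmono hy0 (mem_Ici.2 (smul_nonneg hc.le fun i => (hp i).le)) hyc j
      _ = c * S p j := by rw [hsmul p (fun i => (hp i).le) c hc, Pi.smul_apply, smul_eq_mul]
      _ ≤ c * (lam * p j) := mul_le_mul_of_nonneg_left (hSp j) hc.le
      _ = lam * y j := by rw [hyj]; ring
  exact le_of_mul_le_mul_right key (hyj ▸ mul_pos hc (hp j))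

def IsScalable (T : (ι → ℝ) → ι → ℝ) : Prop :=
  ∀ x, 0 ≤ x → ∀ α : ℝ, 1 < α → ∀ i, T (α • x) i < α * T x i

def IsAsymptoticMap (T S : (ι → ℝ) → ι → ℝ) : Prop :=
  ∀ x, 0 ≤ x → Tendsto (fun h : ℝ => h⁻¹ • T (h • x)) atTop (𝓝 (S x))

variable {T S : (ι → ℝ) → ι → ℝ}

namespace IsScalable

theorem smul_le (hT : IsScalable T) {x : ι → ℝ} (hx : 0 ≤ x) {α : ℝ} (hα : 1 ≤ α) :
    T (α • x) ≤ α • T x := by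
  rcases hα.eq_or_lt with rfl | hα
  · simp
  · exact fun i => (hT x hx α hα i).le

theorem antitoneOn_inv_smul (hT : IsScalable T) {x : ι → ℝ} (hx : 0 ≤ x) :
    AntitoneOn (fun h : ℝ => h⁻¹ • T (h • x)) (Ioi 0) := by
  intro h (hh : 0 < h) h' (hh' : 0 < h') hle
  calc h'⁻¹ • T (h' • x) = h'⁻¹ • T ((h' / h) • h • x) := by
        rw [smul_smul, div_mul_cancel₀ _ hh.ne']
    _ ≤ h'⁻¹ • (h' / h) • T (h • x) :=
        smul_le_smul_of_nonneg_left (hT.smul_le (smul_nonneg hh.le hx) ((one_le_div hh).2 hle))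
          (inv_nonneg.2 hh'.le)
    _ = h⁻¹ • T (h • x) := by
        rw [smul_smul, inv_mul_eq_div, div_div_cancel_left' hh'.ne']

theorem exists_lt_one_le_smul_of_lt [Finite ι] [Nonempty ι] (hT : IsScalable T)
    (hmono : MonotoneOn T (Ici 0)) (hpos : ∀ x, 0 ≤ x → ∀ i, 0 < T x i)
    {p p' : ι → ℝ} {u u' : ℝ} (hp : ∀ i, 0 < p i) (hp' : ∀ i, 0 < p' i) (hu' : 0 < u')
    (hfix : p = u • T p) (hfix' : p' = u' • T p') (hlt : u' < u) :
    ∃ c ∈ Ioo (0 : ℝ) 1, p' ≤ c • p := by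
  obtain ⟨j, hj⟩ := Finite.exists_max fun i => p' i / p i
  set c := p' j / p j
  have hc : 0 < c := div_pos (hp' j) (hp j)
  have hle : p' ≤ c • p := fun i => (div_le_iff₀ (hp i)).1 (hj i)
  refine ⟨c, ⟨hc, ?_⟩, hle⟩
  by_contra! hc1
  have hp0 : 0 ≤ p := fun i => (hp i).le
  have hpj : p j = u * T p j := congrFun hfix j
  have hp'j : p' j = u' * T p' j := congrFun hfix' j
  have : p' j < p' j :=
    calc p' j = u' * T p' j := hp'j
      _ ≤ u' * T (c • p) j := mul_le_mul_of_nonneg_left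
          (hmono (fun i => (hp' i).le) (mem_Ici.2 (smul_nonneg hc.le hp0)) hle j) hu'.le
      _ ≤ u' * (c * T p j) := mul_le_mul_of_nonneg_left (hT.smul_le hp0 hc1 j) hu'.le
      _ < u * (c * T p j) := mul_lt_mul_of_pos_right hlt (mul_pos hc (hpos p hp0 j))
      _ = c * p j := by rw [hpj]; ring
      _ = p' j := div_mul_cancel₀ _ (hp j).ne'
  exact lt_irrefl _ this

end IsScalable

theorem isAsymptoticMap_of_tendsto_div
    (h : ∀ x, 0 ≤ x → ∀ i, Tendsto (fun h : ℝ => T (h • x) i / h) atTop (𝓝 (S x i))) :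
    IsAsymptoticMap T S := fun x hx => tendsto_pi_nhds.2 fun i => by
  simpa only [Pi.smul_apply, smul_eq_mul, inv_mul_eq_div] using h x hx i

namespace IsAsymptoticMap

theorem le_inv_smul (hS : IsAsymptoticMap T S) (hT : IsScalable T) {x : ι → ℝ} (hx : 0 ≤ x)
    {h : ℝ} (hh : 0 < h) : S x ≤ h⁻¹ • T (h • x) :=
  le_of_tendsto (hS x hx) <| (eventually_ge_atTop h).mono fun _ hle =>
    hT.antitoneOn_inv_smul hx hh (hh.trans_le hle) hle

theorem le_apply (hS : IsAsymptoticMap T S) (hT : IsScalable T) {x : ι → ℝ} (hx : 0 ≤ x) :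
    S x ≤ T x := by
  simpa using hS.le_inv_smul hT hx one_pos

theorem monotoneOn (hS : IsAsymptoticMap T S) (hmono : MonotoneOn T (Ici 0)) :
    MonotoneOn S (Ici 0) := fun x (hx : 0 ≤ x) y (hy : 0 ≤ y) hxy =>
  le_of_tendsto_of_tendsto (hS x hx) (hS y hy) <| (eventually_gt_atTop 0).mono fun _ hh =>
    smul_le_smul_of_nonneg_left (hmono (smul_nonneg hh.le hx) (smul_nonneg hh.le hy)
      (smul_le_smul_of_nonneg_left hxy hh.le)) (inv_nonneg.2 hh.le)

theorem map_smul (hS : IsAsymptoticMap T S) {x : ι → ℝ} (hx : 0 ≤ x) {c : ℝ} (hc : 0 < c) :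
    S (c • x) = c • S x := by
  have h := ((hS x hx).comp (tendsto_id.atTop_mul_const hc)).const_smul c
  refine tendsto_nhds_unique (hS _ (smul_nonneg hc.le hx)) (h.congr' ?_)
  filter_upwards [eventually_gt_atTop 0] with h hh
  simp only [Function.comp_apply, id, smul_smul, mul_inv, mul_comm c, mul_assoc,
    inv_mul_cancel₀ hc.ne', mul_one]

variable {α : Type*} {l : Filter α} [l.NeBot] {x : α → ι → ℝ} {q : α → ℝ} {x₀ y₀ : ι → ℝ}

theorem le_apply_of_tendsto (hS : IsAsymptoticMap T S) (hT : IsScalable T)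
    (hcont : ContinuousOn T (Ici 0)) (hx0 : ∀ᶠ a in l, 0 ≤ x a) (hx₀ : 0 ≤ x₀)
    (hx : Tendsto x l (𝓝 x₀)) (hq : Tendsto q l atTop)
    (hy : Tendsto (fun a => (q a)⁻¹ • T (q a • x a)) l (𝓝 y₀)) : y₀ ≤ S x₀ := by
  have hbound : ∀ h : ℝ, 0 < h → y₀ ≤ h⁻¹ • T (h • x₀) := fun h hh => by
    have hhx : Tendsto (fun a => h • x a) l (𝓝[Ici 0] (h • x₀)) :=
      tendsto_nhdsWithin_iff.2 ⟨hx.const_smul h, hx0.mono fun _ ha => smul_nonneg hh.le ha⟩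
    refine le_of_tendsto_of_tendsto hy
      (((hcont _ (smul_nonneg hh.le hx₀)).tendsto.comp hhx).const_smul h⁻¹) ?_
    filter_upwards [hx0, hq.eventually_ge_atTop h] with a ha hqa
    exact hT.antitoneOn_inv_smul ha hh (hh.trans_le hqa) hqa
  exact ge_of_tendsto (hS x₀ hx₀) ((eventually_gt_atTop 0).mono hbound)

/-- `S` need not be continuous at `x₀`; monotonicity and homogeneity of `S` take its place,
through `c • x₀ ≤ x a` for `c < 1`. -/
theorem apply_le_of_tendsto [Finite ι] (hS : IsAsymptoticMap T S) (hT : IsScalable T)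
    (hmono : MonotoneOn T (Ici 0)) (hx0 : ∀ᶠ a in l, 0 ≤ x a) (hx₀ : 0 ≤ x₀)
    (hx : Tendsto x l (𝓝 x₀)) (hq : Tendsto q l atTop)
    (hy : Tendsto (fun a => (q a)⁻¹ • T (q a • x a)) l (𝓝 y₀)) : S x₀ ≤ y₀ := by
  have hbound : ∀ c ∈ Ioo (0 : ℝ) 1, c • S x₀ ≤ y₀ := fun c ⟨hc0, hc1⟩ => by
    refine ge_of_tendsto hy ?_
    filter_upwards [hx0, eventually_smul_le_of_tendsto_s13 hx0 hx₀ hx hc1,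
      hq.eventually_gt_atTop 0] with a ha hca hqa
    calc c • S x₀ = S (c • x₀) := (hS.map_smul hx₀ hc0).symm
      _ ≤ S (x a) := hS.monotoneOn hmono (smul_nonneg hc0.le hx₀) ha hca
      _ ≤ (q a)⁻¹ • T (q a • x a) := hS.le_inv_smul hT ha hqa
  have hlim : Tendsto (fun c : ℝ => c • S x₀) (𝓝[<] 1) (𝓝 (S x₀)) := by
    simpa using ((tendsto_id (x := 𝓝 (1 : ℝ))).mono_left nhdsWithin_le_nhds).smul_const (S x₀)
  exact le_of_tendsto hlim (eventually_of_mem (Ioo_mem_nhdsLT one_pos) hbound)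

theorem apply_eq_of_tendsto [Finite ι] (hS : IsAsymptoticMap T S) (hT : IsScalable T)
    (hmono : MonotoneOn T (Ici 0)) (hcont : ContinuousOn T (Ici 0))
    (hx0 : ∀ᶠ a in l, 0 ≤ x a) (hx : Tendsto x l (𝓝 x₀)) (hq : Tendsto q l atTop)
    (hy : Tendsto (fun a => (q a)⁻¹ • T (q a • x a)) l (𝓝 y₀)) : S x₀ = y₀ :=
  have hx₀ : 0 ≤ x₀ := isClosed_Ici.mem_of_tendsto hx hx0
  le_antisymm (hS.apply_le_of_tendsto hT hmono hx0 hx₀ hx hq hy)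
    (hS.le_apply_of_tendsto hT hcont hx0 hx₀ hx hq hy)

end IsAsymptoticMap

def IsCanonicalSolution (T : (ι → ℝ) → ι → ℝ) (ν : (ι → ℝ) → ℝ) (P : ℝ → ι → ℝ)
    (U : ℝ → ℝ) : Prop :=
  ∀ q : ℝ, 0 < q → (∀ i, 0 < P q i) ∧ 0 < U q ∧ P q = U q • T (P q) ∧ ν (P q) = q

namespace IsCanonicalSolution

variable {ν ν' : (ι → ℝ) → ℝ} {P : ℝ → ι → ℝ} {U : ℝ → ℝ} {q : ℝ}

theorem nonneg (hsol : IsCanonicalSolution T ν P U) (hq : 0 < q) : 0 ≤ P q :=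
  fun i => ((hsol q hq).1 i).le

theorem nonempty (hsol : IsCanonicalSolution T ν P U) (hν : IsMonotoneNorm ν) :
    Nonempty ι := by
  by_contra h
  have : IsEmpty ι := not_nonempty_iff.1 h
  have h1 := (hsol 1 one_pos).2.2.2
  rw [Subsingleton.elim (P 1) 0, (hν.eq_zero_iff 0).2 rfl] at h1
  exact zero_ne_one h1

theorem apply_eq_inv_smul (hsol : IsCanonicalSolution T ν P U) (hq : 0 < q) :
    T (P q) = (U q)⁻¹ • P q :=
  ((inv_smul_eq_iff₀ (hsol q hq).2.1.ne').2 (hsol q hq).2.2.1).symm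

theorem monotoneOn [Finite ι] [Nonempty ι] (hsol : IsCanonicalSolution T ν P U)
    (hν : IsMonotoneNorm ν) (hT : IsScalable T) (hmono : MonotoneOn T (Ici 0))
    (hpos : ∀ x, 0 ≤ x → ∀ i, 0 < T x i) : MonotoneOn U (Ioi 0) := by
  intro q (hq : 0 < q) q' (hq' : 0 < q') hqq'
  by_contra! hlt
  obtain ⟨hp, -, hfix, hνq⟩ := hsol q hq
  obtain ⟨hp', hu', hfix', hνq'⟩ := hsol q' hq'
  obtain ⟨c, ⟨hc0, hc1⟩, hle⟩ :=
    hT.exists_lt_one_le_smul_of_lt hmono hpos hp hp' hu' hfix hfix' hlt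
  have := hν.mono _ _ (hsol.nonneg hq') hle
  rw [hν.smul, abs_of_pos hc0, hνq, hνq'] at this
  nlinarith

theorem eigenvalue_le [Finite ι] (hsol : IsCanonicalSolution T ν P U)
    (hS : IsAsymptoticMap T S) (hT : IsScalable T) (hmono : MonotoneOn T (Ici 0)) (hq : 0 < q) :
    ∀ μ ∈ nonnegEigenvalues S, μ ≤ (U q)⁻¹ := fun _ ⟨_, _, hy0, hy, hSy⟩ =>
  eigenvalue_le_of_apply_le_smul (hS.monotoneOn hmono) (fun _ hx _ hc => hS.map_smul hx hc)
    (hsol q hq).1 (hsol.apply_eq_inv_smul hq ▸ hS.le_apply hT (hsol.nonneg hq)) hy0 hy hSy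

theorem le_inv_sSup [Finite ι] (hsol : IsCanonicalSolution T ν P U) (hS : IsAsymptoticMap T S)
    (hT : IsScalable T) (hmono : MonotoneOn T (Ici 0)) (hρ : 0 < sSup (nonnegEigenvalues S))
    (hq : 0 < q) : U q ≤ (sSup (nonnegEigenvalues S))⁻¹ :=
  (le_inv_comm₀ hρ (hsol q hq).2.1).1 <|
    Real.sSup_le (hsol.eigenvalue_le hS hT hmono hq) (inv_nonneg.2 (hsol q hq).2.1.le)

theorem inv_mem_nonnegEigenvalues [Fintype ι] (hsol : IsCanonicalSolution T ν P U)
    (hν : IsMonotoneNorm ν) (hS : IsAsymptoticMap T S) (hT : IsScalable T)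
    (hmono : MonotoneOn T (Ici 0)) (hcont : ContinuousOn T (Ici 0)) {u : ℝ}
    (hU : Tendsto U atTop (𝓝 u)) (hu : 0 < u) : u⁻¹ ∈ nonnegEigenvalues S := by
  classical
  set x : ℝ → ι → ℝ := fun q => q⁻¹ • P q
  have hνx : ∀ q, 0 < q → ν (x q) = 1 := fun q hq => by
    rw [hν.smul, (hsol q hq).2.2.2, abs_of_pos (inv_pos.2 hq), inv_mul_cancel₀ hq.ne']
  have hx0 : ∀ q, 0 < q → 0 ≤ x q := fun q hq =>
    smul_nonneg (inv_nonneg.2 hq.le) (hsol.nonneg hq)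
  have hxK : ∀ᶠ q in atTop, x q ∈ Icc 0 fun i => 1 / ν (Pi.single i 1) :=
    (eventually_gt_atTop 0).mono fun q hq =>
      ⟨hx0 q hq, fun i => hνx q hq ▸ hν.apply_le_div (hx0 q hq) i⟩
  -- the eigenvector is a cluster point of the normalized budgets `P q / q`
  obtain ⟨x₀, -, hclust⟩ := isCompact_Icc.exists_mapClusterPt_of_frequently hxK.frequently
  obtain ⟨𝒰, h𝒰, hx⟩ := mapClusterPt_iff_ultrafilter.1 hclust
  have hpos𝒰 : ∀ᶠ q in (𝒰 : Filter ℝ), 0 < q := h𝒰 (eventually_gt_atTop 0)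
  have hνx₀ : ν x₀ = 1 :=
    tendsto_nhds_unique ((hν.continuous.tendsto x₀).comp hx)
      (tendsto_const_nhds.congr' (hpos𝒰.mono fun q hq => (hνx q hq).symm))
  have hx₀ : x₀ ≠ 0 := fun h => by simp [h, (hν.eq_zero_iff 0).2 rfl] at hνx₀
  have hdiag : Tendsto (fun q => q⁻¹ • T (q • x q)) 𝒰 (𝓝 (u⁻¹ • x₀)) := by
    refine ((hU.mono_left h𝒰).inv₀ hu.ne').smul hx |>.congr' ?_
    filter_upwards [hpos𝒰] with q hq
    simp only [x, smul_smul, mul_inv_cancel₀ hq.ne', one_smul, hsol.apply_eq_inv_smul hq]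
    rw [mul_comm]
  exact ⟨inv_nonneg.2 hu.le, x₀, isClosed_Ici.mem_of_tendsto hx (hpos𝒰.mono hx0), hx₀,
    hS.apply_eq_of_tendsto hT hmono hcont (hpos𝒰.mono hx0) hx (tendsto_id.mono_left h𝒰) hdiag⟩

theorem tendsto_atTop [Fintype ι] [Nonempty ι] (hsol : IsCanonicalSolution T ν P U)
    (hν : IsMonotoneNorm ν) (hS : IsAsymptoticMap T S) (hT : IsScalable T)
    (hmono : MonotoneOn T (Ici 0)) (hcont : ContinuousOn T (Ici 0))
    (hpos : ∀ x, 0 ≤ x → ∀ i, 0 < T x i) (hρ : 0 < sSup (nonnegEigenvalues S)) :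
    Tendsto U atTop (𝓝 (sSup (nonnegEigenvalues S))⁻¹) := by
  have hle : ∀ q ∈ Ioi (0 : ℝ), U q ≤ (sSup (nonnegEigenvalues S))⁻¹ :=
    fun q hq => hsol.le_inv_sSup hS hT hmono hρ hq
  have hbdd : BddAbove (U '' Ioi 0) := ⟨_, forall_mem_image.2 hle⟩
  have hU := (hsol.monotoneOn hν hT hmono hpos).tendsto_atTop_csSup_image_Ioi hbdd
  set u := sSup (U '' Ioi 0)
  have hu : 0 < u :=
    (hsol 1 one_pos).2.1.trans_le (le_csSup hbdd (mem_image_of_mem U (mem_Ioi.2 one_pos)))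
  have hu_le : u ≤ (sSup (nonnegEigenvalues S))⁻¹ :=
    csSup_le (nonempty_Ioi.image U) (forall_mem_image.2 hle)
  have hinv_le : u⁻¹ ≤ sSup (nonnegEigenvalues S) :=
    le_csSup ⟨_, hsol.eigenvalue_le hS hT hmono one_pos⟩
      (hsol.inv_mem_nonnegEigenvalues hν hS hT hmono hcont hU hu)
  rwa [le_antisymm hu_le ((inv_le_comm₀ hu hρ).1 hinv_le)] at hU

theorem tendsto_nhdsGT_zero (hsol : IsCanonicalSolution T ν P U) (hν : IsMonotoneNorm ν) :
    Tendsto P (𝓝[>] 0) (𝓝 0) := by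
  classical
  refine tendsto_pi_nhds.2 fun i => ?_
  have hlim : Tendsto (fun q : ℝ => q / ν (Pi.single i 1)) (𝓝[>] 0) (𝓝 0) := by
    simpa using ((tendsto_id (x := 𝓝 (0 : ℝ))).mono_left nhdsWithin_le_nhds).div_const
      (ν (Pi.single i 1))
  refine tendsto_of_tendsto_of_tendsto_of_le_of_le' tendsto_const_nhds hlim ?_ ?_ <;>
    filter_upwards [self_mem_nhdsWithin] with q (hq : 0 < q)
  · exact hsol.nonneg hq i
  · simpa only [(hsol q hq).2.2.2] using hν.apply_le_div (hsol.nonneg hq) i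

theorem div_norm_eq (hsol : IsCanonicalSolution T ν P U) (hν' : IsMonotoneNorm ν')
    (hq : 0 < q) : U q / ν' (P q) = (ν' (T (P q)))⁻¹ := by
  obtain ⟨-, hu, hfix, -⟩ := hsol q hq
  conv_lhs => rw [hfix, hν'.smul, abs_of_pos hu]
  rw [div_mul_eq_div_div, div_self hu.ne', one_div]

theorem div_norm_le [Nonempty ι] (hsol : IsCanonicalSolution T ν P U)
    (hν' : IsMonotoneNorm ν') (hmono : MonotoneOn T (Ici 0))
    (hpos : ∀ x, 0 ≤ x → ∀ i, 0 < T x i) (hq : 0 < q) : U q / ν' (P q) ≤ (ν' (T 0))⁻¹ := by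
  rw [hsol.div_norm_eq hν' hq]
  exact inv_anti₀ (hν'.pos_of_forall_pos (hpos 0 le_rfl))
    (hν'.mono _ _ (fun i => (hpos 0 le_rfl i).le)
      (hmono (mem_Ici.2 le_rfl) (hsol.nonneg hq) (hsol.nonneg hq)))

theorem tendsto_div_norm_nhdsGT_zero [Fintype ι] [Nonempty ι]
    (hsol : IsCanonicalSolution T ν P U) (hν : IsMonotoneNorm ν) (hν' : IsMonotoneNorm ν')
    (hcont : ContinuousOn T (Ici 0)) (hpos : ∀ x, 0 ≤ x → ∀ i, 0 < T x i) :
    Tendsto (fun q => U q / ν' (P q)) (𝓝[>] 0) (𝓝 (ν' (T 0))⁻¹) := by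
  have hP : Tendsto P (𝓝[>] 0) (𝓝[Ici 0] 0) :=
    tendsto_nhdsWithin_iff.2 ⟨hsol.tendsto_nhdsGT_zero hν,
      eventually_mem_nhdsWithin.mono fun _ hq => hsol.nonneg hq⟩
  refine (((hν'.continuous.tendsto _).comp ((hcont 0 (mem_Ici.2 le_rfl)).tendsto.comp hP)).inv₀
    (hν'.pos_of_forall_pos (hpos 0 le_rfl)).ne').congr' ?_
  filter_upwards [self_mem_nhdsWithin] with q hq using (hsol.div_norm_eq hν' hq).symm

end IsCanonicalSolution

/-- For the canonical max-min utility problem with a continuous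
SI mapping T whose asymptotic mapping has positive spectral radius λ_∞, the
utility satisfies sup_{p̄>0} U(p̄) = lim_{p̄→∞} U(p̄) = 1/λ_∞ and the
‖·‖_b-efficiency satisfies sup_{p̄>0} E(p̄) = lim_{p̄→0⁺} E(p̄) = 1/‖T(0)‖_b. -/
theorem stmt13 {N : ℕ} (T : (Fin N → ℝ) → (Fin N → ℝ))
    (hpos : ∀ x : Fin N → ℝ, 0 ≤ x → ∀ i, 0 < T x i)
    (hmono : ∀ x y : Fin N → ℝ, 0 ≤ x → x ≤ y → T x ≤ T y)
    (hscal : ∀ x : Fin N → ℝ, 0 ≤ x → ∀ α : ℝ, 1 < α → ∀ i, T (α • x) i < α * T x i)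
    (hcont : ContinuousOn T {x : Fin N → ℝ | 0 ≤ x})
    (νa νb : (Fin N → ℝ) → ℝ)
    (hνa0 : ∀ x, νa x = 0 ↔ x = 0)
    (hνas : ∀ (a : ℝ) (x : Fin N → ℝ), νa (a • x) = |a| * νa x)
    (hνat : ∀ x y : Fin N → ℝ, νa (x + y) ≤ νa x + νa y)
    (hνam : ∀ x y : Fin N → ℝ, 0 ≤ x → x ≤ y → νa x ≤ νa y)
    (hνb0 : ∀ x, νb x = 0 ↔ x = 0)
    (hνbs : ∀ (a : ℝ) (x : Fin N → ℝ), νb (a • x) = |a| * νb x)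
    (hνbt : ∀ x y : Fin N → ℝ, νb (x + y) ≤ νb x + νb y)
    (hνbm : ∀ x y : Fin N → ℝ, 0 ≤ x → x ≤ y → νb x ≤ νb y)
    (Tinf : (Fin N → ℝ) → (Fin N → ℝ))
    (hTinf : ∀ x : Fin N → ℝ, 0 ≤ x → ∀ i,
      Tendsto (fun h : ℝ => T (h • x) i / h) atTop (nhds (Tinf x i)))
    (laminf : ℝ)
    (hrad : laminf = sSup {μ : ℝ | 0 ≤ μ ∧
      ∃ x : Fin N → ℝ, 0 ≤ x ∧ x ≠ 0 ∧ Tinf x = μ • x})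
    (hlaminf_pos : 0 < laminf)
    (P : ℝ → Fin N → ℝ) (U : ℝ → ℝ)
    (hsol : ∀ q : ℝ, 0 < q →
      (∀ i, 0 < P q i) ∧ 0 < U q ∧ P q = U q • T (P q) ∧ νa (P q) = q)
    (E : ℝ → ℝ) (hE : ∀ q : ℝ, E q = U q / νb (P q)) :
    (IsLUB (U '' Set.Ioi (0 : ℝ)) (1 / laminf) ∧
      Tendsto U atTop (nhds (1 / laminf))) ∧
    (IsLUB (E '' Set.Ioi (0 : ℝ)) (1 / νb (T 0)) ∧
      Tendsto E (nhdsWithin (0 : ℝ) (Set.Ioi 0)) (nhds (1 / νb (T 0)))) := by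
  have hνa : IsMonotoneNorm νa := ⟨hνa0, hνas, hνat, hνam⟩
  have hνb : IsMonotoneNorm νb := ⟨hνb0, hνbs, hνbt, hνbm⟩
  have hsol : IsCanonicalSolution T νa P U := hsol
  have hS : IsAsymptoticMap T Tinf := isAsymptoticMap_of_tendsto_div hTinf
  have hmono : MonotoneOn T (Ici 0) := fun x hx y _ hxy => hmono x y hx hxy
  have := hsol.nonempty hνa
  subst hrad
  obtain rfl : E = fun q => U q / νb (P q) := funext hE
  have hU := hsol.tendsto_atTop hνa hS hscal hmono hcont hpos hlaminf_pos
  have hE := hsol.tendsto_div_norm_nhdsGT_zero hνa hνb hcont hpos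
  simp only [one_div]
  exact ⟨⟨isLUB_image_of_tendsto (fun q hq => hsol.le_inv_sSup hS hscal hmono hlaminf_pos hq)
      (eventually_gt_atTop 0) hU, hU⟩,
    isLUB_image_of_tendsto (l := 𝓝[>] 0) (fun q hq => hsol.div_norm_le hνb hmono hpos hq)
      self_mem_nhdsWithin hE, hE⟩
end

section
/- Let T : ℝ^N_+ → ℝ^N_{++} be a continuous SI mapping, ‖·‖_a and ‖·‖_b monotone norms on ℝ^N, and suppose λ_∞ := ρ(T_∞) > 0, where T_∞ is the asymptotic mapping of T. Suppose for each p̄ > 0 the pair (P(p̄), U(p̄)) ∈ ℝ^N_{++} × ℝ_{++} satisfies P(p̄) = U(p̄) T(P(p̄)) and ‖P(p̄)‖_a = p̄, and set E(p̄) := U(p̄)/‖P(p̄)‖_b. Then: (a) U(p̄) ∈ Θ(1) and E(p̄) ∈ Θ(1/p̄) as p̄ → ∞; and (b) U(p̄) ∈ Θ(p̄) and E(p̄) ∈ Θ(1) as p̄ → 0⁺. Explicitly, for (a) there exist k₀, k₁ > 0 and p̄₀ > 0 such that for all p̄ ≥ p̄₀: k₀ ≤ U(p̄) ≤ k₁ and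 k₀/p̄ ≤ E(p̄) ≤ k₁/p̄; for (b) there exist c₀, c₁ > 0 and p̄₁ > 0 such that for all 0 < p̄ ≤ p̄₁: c₀ p̄ ≤ U(p̄) ≤ c₁ p̄ and c₀ ≤ E(p̄) ≤ c₁. -/
/-!
Write `q = ‖P‖_a` and `g = ‖T P‖_a`, so that `U = q / g`. Monotonicity gives `g ≥ ‖T 0‖_a`, and
since `P ≤ q • w` for a fixed vector `w`, subhomogeneity gives `g ≤ max 1 q * ‖T w‖_a`. For large
`q` the matching bound `U ≤ 1 / μ` comes from a positive eigenpair `T_∞ v = μ v`: because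
`T (h v) / h` decreases to `T_∞ v`, we have `T (t v) ≥ t μ v` for every `t > 0`, and comparing `P`
with the largest multiple `t v ≤ P` at a coordinate where the two touch yields `U μ ≤ 1`.
Finally, monotone norms are equivalent on the nonnegative orthant, so `‖P‖_b` is comparable to
`q` and `E = U / ‖P‖_b` inherits the bounds.
-/

open Filter Topology Set

namespace Seminorm

variable {ι : Type*}

lemma apply_pos_of_ne_zero {p : Seminorm ℝ (ι → ℝ)} (hp₀ : ∀ y, p y = 0 → y = 0) {y : ι → ℝ}
    (hy : y ≠ 0) : 0 < p y :=
  (apply_nonneg p y).lt_of_ne' (mt (hp₀ y) hy)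

variable [DecidableEq ι]

lemma apply_single (p : Seminorm ℝ (ι → ℝ)) (i : ι) (c : ℝ) :
    p (Pi.single i c) = |c| * p (Pi.single i 1) := by
  rw [← Real.norm_eq_abs, ← map_smul_eq_mul, ← Pi.single_smul', smul_eq_mul, mul_one]

lemma mul_apply_single_le {p : Seminorm ℝ (ι → ℝ)} (hp : MonotoneOn p (Ici 0)) {x : ι → ℝ}
    (hx : 0 ≤ x) (i : ι) : x i * p (Pi.single i 1) ≤ p x := by
  have hsingle : Pi.single i (x i) ≤ x := by
    intro j
    rcases eq_or_ne j i with rfl | hj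
    · simp
    · simpa [hj] using hx j
  calc x i * p (Pi.single i 1) = p (Pi.single i (x i)) := by
        rw [p.apply_single i (x i), abs_of_nonneg (hx i)]
    _ ≤ p x := hp (Pi.single_nonneg.mpr (hx i)) hx hsingle

lemma le_smul_inv_single {p : Seminorm ℝ (ι → ℝ)} (hp : MonotoneOn p (Ici 0))
    (hpe : ∀ i, 0 < p (Pi.single i 1)) {x : ι → ℝ} (hx : 0 ≤ x) :
    x ≤ p x • fun i => (p (Pi.single i 1))⁻¹ := fun i => by
  simpa [← div_eq_mul_inv, le_div_iff₀ (hpe i)] using mul_apply_single_le hp hx i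

variable [Fintype ι]

lemma apply_le_sum_abs_mul_single (p : Seminorm ℝ (ι → ℝ)) (x : ι → ℝ) :
    p x ≤ ∑ i, |x i| * p (Pi.single i 1) := by
  calc p x = p (∑ i, Pi.single i (x i)) := by rw [Finset.univ_sum_single]
    _ ≤ ∑ i, p (Pi.single i (x i)) :=
        Finset.le_sum_of_subadditive p (map_zero p).le (map_add_le_add p) _ _
    _ = ∑ i, |x i| * p (Pi.single i 1) :=
        Finset.sum_congr rfl fun i _ => p.apply_single i (x i)

lemma exists_le_mul_of_monotoneOn (q : Seminorm ℝ (ι → ℝ)) {p : Seminorm ℝ (ι → ℝ)}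
    (hp : MonotoneOn p (Ici 0)) (hp₀ : ∀ y, p y = 0 → y = 0) :
    ∃ C, 0 < C ∧ ∀ x, 0 ≤ x → q x ≤ C * p x := by
  have hpe : ∀ i, 0 < p (Pi.single i 1) := fun i => apply_pos_of_ne_zero hp₀ (by simp)
  set C₀ := ∑ i, q (Pi.single i 1) / p (Pi.single i 1)
  have hC₀ : 0 ≤ C₀ := Finset.sum_nonneg fun i _ => div_nonneg (apply_nonneg _ _) (hpe i).le
  refine ⟨C₀ + 1, by positivity, fun x hx => ?_⟩
  calc q x ≤ ∑ i, |x i| * q (Pi.single i 1) := q.apply_le_sum_abs_mul_single x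
    _ ≤ ∑ i, q (Pi.single i 1) / p (Pi.single i 1) * p x := by
        refine Finset.sum_le_sum fun i _ => ?_
        rw [abs_of_nonneg (hx i), div_mul_eq_mul_div, le_div_iff₀ (hpe i), mul_comm (q _),
          mul_right_comm]
        exact mul_le_mul_of_nonneg_right (mul_apply_single_le hp hx i) (apply_nonneg _ _)
    _ = C₀ * p x := by rw [Finset.sum_mul]
    _ ≤ (C₀ + 1) * p x := by nlinarith [apply_nonneg p x]

lemma exists_mul_le_and_le_mul_of_monotoneOn {p q : Seminorm ℝ (ι → ℝ)}
    (hp : MonotoneOn p (Ici 0)) (hp₀ : ∀ y, p y = 0 → y = 0) (hq : MonotoneOn q (Ici 0))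
    (hq₀ : ∀ y, q y = 0 → y = 0) :
    ∃ a b, 0 < a ∧ 0 < b ∧ ∀ x, 0 ≤ x → a * p x ≤ q x ∧ q x ≤ b * p x := by
  obtain ⟨b, hb, hqp⟩ := q.exists_le_mul_of_monotoneOn hp hp₀
  obtain ⟨c, hc, hpq⟩ := p.exists_le_mul_of_monotoneOn hq hq₀
  refine ⟨c⁻¹, b, inv_pos.mpr hc, hb, fun x hx => ⟨?_, hqp x hx⟩⟩
  rw [inv_mul_le_iff₀ hc]
  exact hpq x hx

end Seminorm

lemma exists_smul_le_of_pos {ι : Type*} [Fintype ι] {x y : ι → ℝ} (hy : ∀ i, 0 < y i)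
    (hx0 : 0 ≤ x) (hx : x ≠ 0) : ∃ t > 0, ∃ j, t • x ≤ y ∧ t * x j = y j := by
  have hsupp : (Finset.univ.filter fun i => 0 < x i).Nonempty := by
    obtain ⟨i, hi⟩ := Function.ne_iff.mp hx
    exact ⟨i, Finset.mem_filter.mpr ⟨Finset.mem_univ _, (hx0 i).lt_of_ne' hi⟩⟩
  obtain ⟨j, hj, hmin⟩ := Finset.exists_min_image _ (fun i => y i / x i) hsupp
  have hxj : 0 < x j := (Finset.mem_filter.mp hj).2
  refine ⟨y j / x j, div_pos (hy j) hxj, j, fun i => ?_, div_mul_cancel₀ _ hxj.ne'⟩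
  rcases (hx0 i).eq_or_lt with hxi | hxi
  · simp [← hxi, (hy i).le]
  · rw [Pi.smul_apply, smul_eq_mul, ← le_div_iff₀ hxi]
    exact hmin i (Finset.mem_filter.mpr ⟨Finset.mem_univ _, hxi⟩)

section SI

variable {ι : Type*} {T : (ι → ℝ) → ι → ℝ}

def IsSubhomogeneous (T : (ι → ℝ) → ι → ℝ) : Prop :=
  ∀ x, 0 ≤ x → ∀ α : ℝ, 1 ≤ α → T (α • x) ≤ α • T x

lemma isSubhomogeneous_of_scalable
    (hscal : ∀ x : ι → ℝ, 0 ≤ x → ∀ α : ℝ, 1 < α → ∀ i, T (α • x) i < α * T x i) :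
    IsSubhomogeneous T := by
  intro x hx α hα
  rcases hα.eq_or_lt with rfl | hα
  · simp
  · exact fun i => (hscal x hx α hα i).le

/-- Subhomogeneity makes `h ↦ T (h • x) i / h` antitone, so its limit is a lower bound. -/
lemma mul_le_of_tendsto_div (hsub : IsSubhomogeneous T) {x : ι → ℝ} (hx : 0 ≤ x) {i : ι} {L : ℝ}
    (hL : Tendsto (fun h : ℝ => T (h • x) i / h) atTop (𝓝 L)) {h : ℝ} (hh : 0 < h) :
    h * L ≤ T (h • x) i := by
  rw [← le_div_iff₀' hh]
  refine le_of_tendsto hL ?_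
  filter_upwards [eventually_ge_atTop h] with h' hh'
  have hs := hsub (h • x) (smul_nonneg hh.le hx) (h' / h) ((one_le_div hh).mpr hh') i
  rw [smul_smul, div_mul_cancel₀ _ hh.ne', Pi.smul_apply, smul_eq_mul] at hs
  rw [div_le_iff₀ (hh.trans_le hh')]
  exact hs.trans_eq (by ring)

lemma apply_le_max_one_smul (hsub : IsSubhomogeneous T) (hmono : MonotoneOn T (Ici 0))
    {x w : ι → ℝ} (hx : 0 ≤ x) (hw : 0 ≤ w) {c : ℝ} (hxw : x ≤ c • w) : T x ≤ max 1 c • T w := by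
  have hw' : 0 ≤ max 1 c • w := smul_nonneg (zero_le_one.trans (le_max_left _ _)) hw
  calc T x ≤ T (max 1 c • w) :=
        hmono hx hw' (hxw.trans (smul_le_smul_of_nonneg_right (le_max_right _ _) hw))
    _ ≤ max 1 c • T w := hsub w hw _ (le_max_left _ _)

lemma mul_le_one_of_eigenvector_of_fixed [Fintype ι] (hsub : IsSubhomogeneous T)
    (hmono : MonotoneOn T (Ici 0)) {v : ι → ℝ} (hv0 : 0 ≤ v) (hv : v ≠ 0) {μ : ℝ}
    (hTv : ∀ i, Tendsto (fun h : ℝ => T (h • v) i / h) atTop (𝓝 (μ * v i)))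
    {x : ι → ℝ} (hx : ∀ i, 0 < x i) {u : ℝ} (hu : 0 ≤ u) (hfix : x = u • T x) :
    u * μ ≤ 1 := by
  obtain ⟨t, ht, j, htv, htvj⟩ := exists_smul_le_of_pos hx hv0 hv
  have key : u * μ * x j ≤ 1 * x j :=
    calc u * μ * x j = u * (t * (μ * v j)) := by rw [← htvj]; ring
      _ ≤ u * T (t • v) j := by gcongr; exact mul_le_of_tendsto_div hsub hv0 (hTv j) ht
      _ ≤ u * T x j := by
          gcongr; exact hmono (smul_nonneg ht.le hv0) (fun i => (hx i).le) htv j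
      _ = 1 * x j := by rw [one_mul]; exact (congrFun hfix j).symm
  exact le_of_mul_le_mul_right key (hx j)

end SI

namespace Seminorm

variable {ι : Type*} {T : (ι → ℝ) → ι → ℝ} (p : Seminorm ℝ (ι → ℝ)) {x : ι → ℝ} {u : ℝ}

lemma apply_eq_mul_of_fixed (hu : 0 ≤ u) (hfix : x = u • T x) : p x = u * p (T x) := by
  conv_lhs => rw [hfix]
  rw [map_smul_eq_mul, Real.norm_of_nonneg hu]

lemma le_div_of_fixed (hp : MonotoneOn p (Ici 0)) (hmono : MonotoneOn T (Ici 0))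
    (hTnn : ∀ y, 0 ≤ y → 0 ≤ T y) (hT0 : 0 < p (T 0)) (hx : 0 ≤ x) (hu : 0 ≤ u)
    (hfix : x = u • T x) : u ≤ p x / p (T 0) := by
  rw [le_div_iff₀ hT0, p.apply_eq_mul_of_fixed hu hfix]
  exact mul_le_mul_of_nonneg_left
    (hp (hTnn 0 le_rfl) (hTnn x hx) (hmono self_mem_Ici hx hx)) hu

lemma div_le_of_fixed (hp : MonotoneOn p (Ici 0))
    (hsub : IsSubhomogeneous T)
    (hmono : MonotoneOn T (Ici 0)) (hTnn : ∀ y, 0 ≤ y → 0 ≤ T y) {w : ι → ℝ} (hw : 0 ≤ w)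
    (hTw : 0 < p (T w)) (hx : 0 ≤ x) (hxw : x ≤ p x • w) (hu : 0 ≤ u) (hfix : x = u • T x) :
    p x / (max 1 (p x) * p (T w)) ≤ u := by
  have hmax : 0 < max 1 (p x) * p (T w) := mul_pos (lt_max_of_lt_left one_pos) hTw
  rw [div_le_iff₀ hmax]
  calc p x = u * p (T x) := p.apply_eq_mul_of_fixed hu hfix
    _ ≤ u * p (max 1 (p x) • T w) := by
        refine mul_le_mul_of_nonneg_left (hp (hTnn x hx) ?_ ?_) hu
        · exact smul_nonneg (zero_le_one.trans (le_max_left _ _)) (hTnn w hw)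
        · exact apply_le_max_one_smul hsub hmono hx hw hxw
    _ = u * (max 1 (p x) * p (T w)) := by
        rw [map_smul_eq_mul, Real.norm_of_nonneg (zero_le_one.trans (le_max_left _ _))]

lemma exists_bounds_of_fixed [Fintype ι] [DecidableEq ι] (hp : MonotoneOn p (Ici 0))
    (hp₀ : ∀ y, p y = 0 → y = 0) (hTpos : ∀ y, 0 ≤ y → ∀ i, 0 < T y i)
    (hsub : IsSubhomogeneous T)
    (hmono : MonotoneOn T (Ici 0)) {v : ι → ℝ} (hv0 : 0 ≤ v) (hv : v ≠ 0) {μ : ℝ} (hμ : 0 < μ)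
    (hTv : ∀ i, Tendsto (fun h : ℝ => T (h • v) i / h) atTop (𝓝 (μ * v i))) :
    ∃ M m, 0 < M ∧ 0 < m ∧ ∀ (x : ι → ℝ) (u : ℝ), (∀ i, 0 < x i) → 0 ≤ u → x = u • T x →
      p x / (max 1 (p x) * M) ≤ u ∧ u ≤ min μ⁻¹ (p x / m) := by
  obtain ⟨i₀, -⟩ := Function.ne_iff.mp hv
  have hTne : ∀ y, 0 ≤ y → T y ≠ 0 := fun y hy h => (hTpos y hy i₀).ne' (congrFun h i₀)
  have hTnn : ∀ y, 0 ≤ y → 0 ≤ T y := fun y hy i => (hTpos y hy i).le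
  have hpe : ∀ i, 0 < p (Pi.single i 1) := fun i => apply_pos_of_ne_zero hp₀ (by simp)
  have hw : 0 ≤ fun i => (p (Pi.single i 1))⁻¹ := fun i => (inv_pos.mpr (hpe i)).le
  refine ⟨_, _, apply_pos_of_ne_zero hp₀ (hTne _ hw), apply_pos_of_ne_zero hp₀ (hTne 0 le_rfl),
    fun x u hx hu hfix => ⟨?_, le_min ?_ ?_⟩⟩
  · have hx0 : 0 ≤ x := fun i => (hx i).le
    exact p.div_le_of_fixed hp hsub hmono hTnn hw (apply_pos_of_ne_zero hp₀ (hTne _ hw)) hx0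
      (le_smul_inv_single hp hpe hx0) hu hfix
  · rw [← one_div, le_div_iff₀ hμ]
    exact mul_le_one_of_eigenvector_of_fixed hsub hmono hv0 hv hTv hx hu hfix
  · exact p.le_div_of_fixed hp hmono hTnn (apply_pos_of_ne_zero hp₀ (hTne 0 le_rfl))
      (fun i => (hx i).le) hu hfix

end Seminorm

lemma div_bounds_of_bounds {u v k K a b q : ℝ} (hk : 0 ≤ k) (ha : 0 < a) (hq : 0 < q)
    (hu : k ≤ u ∧ u ≤ K) (hv : a * q ≤ v ∧ v ≤ b * q) :
    k / b / q ≤ u / v ∧ u / v ≤ K / a / q := by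
  have hv0 : 0 < v := (mul_pos ha hq).trans_le hv.1
  rw [div_div, div_div]
  exact ⟨div_le_div₀ (hk.trans hu.1) hu.1 hv0 hv.2,
    div_le_div₀ (hk.trans (hu.1.trans hu.2)) hu.2 (mul_pos ha hq) hv.1⟩

section Asymptotics

variable {U V E : ℝ → ℝ} {M m μ a b : ℝ}

lemma exists_theta_constants_atTop (hE : ∀ q, E q = U q / V q) (hM : 0 < M) (hμ : 0 < μ)
    (ha : 0 < a) (hb : 0 < b) (hU : ∀ q, 0 < q → q / (max 1 q * M) ≤ U q ∧ U q ≤ μ⁻¹)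
    (hV : ∀ q, 0 < q → a * q ≤ V q ∧ V q ≤ b * q) :
    ∃ k₀ k₁ q₀ : ℝ, 0 < k₀ ∧ 0 < k₁ ∧ 0 < q₀ ∧
      ∀ q : ℝ, q₀ ≤ q → (k₀ ≤ U q ∧ U q ≤ k₁) ∧ (k₀ / q ≤ E q ∧ E q ≤ k₁ / q) := by
  refine ⟨min M⁻¹ (M⁻¹ / b), max μ⁻¹ (μ⁻¹ / a), 1, by positivity, by positivity, one_pos,
    fun q hq => ?_⟩
  have hq0 : 0 < q := one_pos.trans_le hq
  have hUq : M⁻¹ ≤ U q ∧ U q ≤ μ⁻¹ := by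
    obtain ⟨hlow, hup⟩ := hU q hq0
    rw [max_eq_right hq, div_mul_cancel_left₀ hq0.ne'] at hlow
    exact ⟨hlow, hup⟩
  obtain ⟨hE₀, hE₁⟩ := div_bounds_of_bounds (inv_nonneg.mpr hM.le) ha hq0 hUq (hV q hq0)
  rw [hE]
  exact ⟨⟨(min_le_left _ _).trans hUq.1, hUq.2.trans (le_max_left _ _)⟩,
    (div_le_div_of_nonneg_right (min_le_right _ _) hq0.le).trans hE₀,
    hE₁.trans (div_le_div_of_nonneg_right (le_max_right _ _) hq0.le)⟩

lemma exists_theta_constants_nhdsGT (hE : ∀ q, E q = U q / V q) (hM : 0 < M) (hm : 0 < m)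
    (ha : 0 < a) (hb : 0 < b) (hU : ∀ q, 0 < q → q / (max 1 q * M) ≤ U q ∧ U q ≤ q / m)
    (hV : ∀ q, 0 < q → a * q ≤ V q ∧ V q ≤ b * q) :
    ∃ c₀ c₁ q₁ : ℝ, 0 < c₀ ∧ 0 < c₁ ∧ 0 < q₁ ∧
      ∀ q : ℝ, 0 < q → q ≤ q₁ → (c₀ * q ≤ U q ∧ U q ≤ c₁ * q) ∧ (c₀ ≤ E q ∧ E q ≤ c₁) := by
  refine ⟨min M⁻¹ (M⁻¹ / b), max m⁻¹ (m⁻¹ / a), 1, by positivity, by positivity, one_pos,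
    fun q hq hq1 => ?_⟩
  have hUq : M⁻¹ * q ≤ U q ∧ U q ≤ m⁻¹ * q := by
    obtain ⟨hlow, hup⟩ := hU q hq
    rw [max_eq_left hq1, one_mul] at hlow
    rw [inv_mul_eq_div, inv_mul_eq_div]
    exact ⟨hlow, hup⟩
  obtain ⟨hE₀, hE₁⟩ := div_bounds_of_bounds (by positivity) ha hq hUq (hV q hq)
  have hcancel : ∀ c d : ℝ, c * q / d / q = c / d := fun c d => by field_simp
  rw [hcancel] at hE₀ hE₁
  rw [hE]
  exact ⟨⟨(mul_le_mul_of_nonneg_right (min_le_left _ _) hq.le).trans hUq.1,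
      hUq.2.trans (mul_le_mul_of_nonneg_right (le_max_left _ _) hq.le)⟩,
    (min_le_right _ _).trans hE₀, hE₁.trans (le_max_right _ _)⟩

end Asymptotics

theorem stmt16_general {N : ℕ} (T : (Fin N → ℝ) → (Fin N → ℝ))
    (hpos : ∀ x : Fin N → ℝ, 0 ≤ x → ∀ i, 0 < T x i)
    (hmono : ∀ x y : Fin N → ℝ, 0 ≤ x → x ≤ y → T x ≤ T y)
    (hscal : ∀ x : Fin N → ℝ, 0 ≤ x → ∀ α : ℝ, 1 < α → ∀ i, T (α • x) i < α * T x i)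
    (νa νb : (Fin N → ℝ) → ℝ)
    (hνa0 : ∀ x, νa x = 0 ↔ x = 0)
    (hνas : ∀ (a : ℝ) (x : Fin N → ℝ), νa (a • x) = |a| * νa x)
    (hνat : ∀ x y : Fin N → ℝ, νa (x + y) ≤ νa x + νa y)
    (hνam : ∀ x y : Fin N → ℝ, 0 ≤ x → x ≤ y → νa x ≤ νa y)
    (hνb0 : ∀ x, νb x = 0 ↔ x = 0)
    (hνbs : ∀ (a : ℝ) (x : Fin N → ℝ), νb (a • x) = |a| * νb x)
    (hνbt : ∀ x y : Fin N → ℝ, νb (x + y) ≤ νb x + νb y)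
    (hνbm : ∀ x y : Fin N → ℝ, 0 ≤ x → x ≤ y → νb x ≤ νb y)
    (Tinf : (Fin N → ℝ) → (Fin N → ℝ))
    (hTinf : ∀ x : Fin N → ℝ, 0 ≤ x → ∀ i,
      Tendsto (fun h : ℝ => T (h • x) i / h) atTop (nhds (Tinf x i)))
    (laminf : ℝ)
    (hrad : laminf = sSup {μ : ℝ | 0 ≤ μ ∧
      ∃ x : Fin N → ℝ, 0 ≤ x ∧ x ≠ 0 ∧ Tinf x = μ • x})
    (hlaminf_pos : 0 < laminf)
    (P : ℝ → Fin N → ℝ) (U : ℝ → ℝ)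
    (hsol : ∀ q : ℝ, 0 < q →
      (∀ i, 0 < P q i) ∧ 0 < U q ∧ P q = U q • T (P q) ∧ νa (P q) = q)
    (E : ℝ → ℝ) (hE : ∀ q : ℝ, E q = U q / νb (P q)) :
    (∃ k₀ k₁ q₀ : ℝ, 0 < k₀ ∧ 0 < k₁ ∧ 0 < q₀ ∧
      ∀ q : ℝ, q₀ ≤ q →
        (k₀ ≤ U q ∧ U q ≤ k₁) ∧ (k₀ / q ≤ E q ∧ E q ≤ k₁ / q)) ∧
    (∃ c₀ c₁ q₁ : ℝ, 0 < c₀ ∧ 0 < c₁ ∧ 0 < q₁ ∧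
      ∀ q : ℝ, 0 < q → q ≤ q₁ →
        (c₀ * q ≤ U q ∧ U q ≤ c₁ * q) ∧ (c₀ ≤ E q ∧ E q ≤ c₁)) := by
  let pa : Seminorm ℝ (Fin N → ℝ) := .of νa hνat fun a x => by rw [hνas, Real.norm_eq_abs]
  let pb : Seminorm ℝ (Fin N → ℝ) := .of νb hνbt fun a x => by rw [hνbs, Real.norm_eq_abs]
  have hpa : MonotoneOn pa (Ici 0) := fun x hx y _ => hνam x y hx
  have hpb : MonotoneOn pb (Ici 0) := fun x hx y _ => hνbm x y hx
  obtain ⟨μ, hμ, v, hv0, hv, hTv⟩ : ∃ μ : ℝ, 0 < μ ∧ ∃ v, 0 ≤ v ∧ v ≠ 0 ∧ Tinf v = μ • v := by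
    by_contra! h
    refine hlaminf_pos.not_ge (hrad ▸ Real.sSup_nonpos fun μ ⟨_, v, hv0, hv, hTv⟩ => ?_)
    exact not_lt.mp fun hμ => h μ hμ v hv0 hv hTv
  obtain ⟨M, m, hM, hm, hfixed⟩ := pa.exists_bounds_of_fixed hpa (fun y => (hνa0 y).mp) hpos
    (isSubhomogeneous_of_scalable hscal) (fun x hx y _ => hmono x y hx)
    hv0 hv hμ fun i => by simpa [hTv] using hTinf v hv0 i
  have hU : ∀ q, 0 < q → q / (max 1 q * M) ≤ U q ∧ U q ≤ min μ⁻¹ (q / m) := by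
    intro q hq
    obtain ⟨hP, hUq, hfix, hPq⟩ := hsol q hq
    have hpaP : pa (P q) = q := hPq
    simpa only [hpaP] using hfixed (P q) (U q) hP hUq.le hfix
  obtain ⟨a, b, ha, hb, hab⟩ := pa.exists_mul_le_and_le_mul_of_monotoneOn hpa
    (fun y => (hνa0 y).mp) hpb fun y => (hνb0 y).mp
  have hV : ∀ q, 0 < q → a * q ≤ νb (P q) ∧ νb (P q) ≤ b * q := by
    intro q hq
    obtain ⟨hP, -, -, hPq⟩ := hsol q hq
    have hpaP : pa (P q) = q := hPq
    have hbounds := hab (P q) fun i => (hP i).le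
    rw [hpaP] at hbounds
    exact hbounds
  exact ⟨exists_theta_constants_atTop hE hM hμ ha hb
      (fun q hq => (hU q hq).imp_right (·.trans (min_le_left _ _))) hV,
    exists_theta_constants_nhdsGT hE hM hm ha hb
      (fun q hq => (hU q hq).imp_right (·.trans (min_le_right _ _))) hV⟩

/-- Asymptotic scaling of the utility and efficiency functions of
the canonical max-min utility problem: U ∈ Θ(1) and E ∈ Θ(1/p̄) as p̄ → ∞;
U ∈ Θ(p̄) and E ∈ Θ(1) as p̄ → 0⁺. -/
theorem stmt16 {N : ℕ} (T : (Fin N → ℝ) → (Fin N → ℝ))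
    (hpos : ∀ x : Fin N → ℝ, 0 ≤ x → ∀ i, 0 < T x i)
    (hmono : ∀ x y : Fin N → ℝ, 0 ≤ x → x ≤ y → T x ≤ T y)
    (hscal : ∀ x : Fin N → ℝ, 0 ≤ x → ∀ α : ℝ, 1 < α → ∀ i, T (α • x) i < α * T x i)
    (hcont : ContinuousOn T {x : Fin N → ℝ | 0 ≤ x})
    (νa νb : (Fin N → ℝ) → ℝ)
    (hνa0 : ∀ x, νa x = 0 ↔ x = 0)
    (hνas : ∀ (a : ℝ) (x : Fin N → ℝ), νa (a • x) = |a| * νa x)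
    (hνat : ∀ x y : Fin N → ℝ, νa (x + y) ≤ νa x + νa y)
    (hνam : ∀ x y : Fin N → ℝ, 0 ≤ x → x ≤ y → νa x ≤ νa y)
    (hνb0 : ∀ x, νb x = 0 ↔ x = 0)
    (hνbs : ∀ (a : ℝ) (x : Fin N → ℝ), νb (a • x) = |a| * νb x)
    (hνbt : ∀ x y : Fin N → ℝ, νb (x + y) ≤ νb x + νb y)
    (hνbm : ∀ x y : Fin N → ℝ, 0 ≤ x → x ≤ y → νb x ≤ νb y)
    (Tinf : (Fin N → ℝ) → (Fin N → ℝ))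
    (hTinf : ∀ x : Fin N → ℝ, 0 ≤ x → ∀ i,
      Tendsto (fun h : ℝ => T (h • x) i / h) atTop (nhds (Tinf x i)))
    (laminf : ℝ)
    (hrad : laminf = sSup {μ : ℝ | 0 ≤ μ ∧
      ∃ x : Fin N → ℝ, 0 ≤ x ∧ x ≠ 0 ∧ Tinf x = μ • x})
    (hlaminf_pos : 0 < laminf)
    (P : ℝ → Fin N → ℝ) (U : ℝ → ℝ)
    (hsol : ∀ q : ℝ, 0 < q →
      (∀ i, 0 < P q i) ∧ 0 < U q ∧ P q = U q • T (P q) ∧ νa (P q) = q)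
    (E : ℝ → ℝ) (hE : ∀ q : ℝ, E q = U q / νb (P q)) :
    (∃ k₀ k₁ q₀ : ℝ, 0 < k₀ ∧ 0 < k₁ ∧ 0 < q₀ ∧
      ∀ q : ℝ, q₀ ≤ q →
        (k₀ ≤ U q ∧ U q ≤ k₁) ∧ (k₀ / q ≤ E q ∧ E q ≤ k₁ / q)) ∧
    (∃ c₀ c₁ q₁ : ℝ, 0 < c₀ ∧ 0 < c₁ ∧ 0 < q₁ ∧
      ∀ q : ℝ, 0 < q → q ≤ q₁ →
        (c₀ * q ≤ U q ∧ U q ≤ c₁ * q) ∧ (c₀ ≤ E q ∧ E q ≤ c₁)) :=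
  stmt16_general T hpos hmono hscal νa νb hνa0 hνas hνat hνam hνb0 hνbs hνbt hνbm Tinf hTinf laminf
    hrad hlaminf_pos P U hsol E hE
end
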